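/- Let k ≥ 2 be an integer and let A ⊆ [n]^k satisfy |A| ≥ 2·c_k(n). Then Γ_k(A) ≥ (|A|/(2·c_k(n)))^{k+1} · c_k(n). -/

import Mathlib

/-- The grid `{1,…,n}^k` as a finset of functions `Fin k → ℕ`. -/
def gridNk (k n : ℕ) : Finset (Fin k → ℕ) :=
  Fintype.piFinset fun _ => Finset.Icc 1 n

/-- `C` is a `k`-dimensional corner in `[n]^k`: a set of points
`{a} ∪ {a + d·eᵢ : 1 ≤ i ≤ k}` for some `a` and integer `d > 0`, all lying in the grid. -/
def IsGridCorner (k n : ℕ) (C : Finset (Fin k → ℕ)) : Prop :=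
  ∃ a : Fin k → ℕ, ∃ d : ℕ, 0 < d ∧
    C = insert a (Finset.image (fun i => Function.update a i (a i + d)) Finset.univ) ∧
    C ⊆ gridNk k n

/-- `A` is `k`-dimensional corner-free: it contains no `k`-dimensional corner. -/
def GridCornerFree (k n : ℕ) (A : Finset (Fin k → ℕ)) : Prop :=
  ∀ C : Finset (Fin k → ℕ), IsGridCorner k n C → ¬ C ⊆ A

/-- `c_k(n)`: the maximum size of a `k`-dimensional corner-free subset of `[n]^k`. -/
noncomputable def cornerFreeNumber (k n : ℕ) : ℕ :=
  sSup {m : ℕ | ∃ A : Finset (Fin k → ℕ), A ⊆ gridNk k n ∧ GridCornerFree k n A ∧ A.card = m}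

/-- `Γ_k(A)`: the number of `k`-dimensional corners contained in `A`. -/
noncomputable def cornerCount (k n : ℕ) (A : Finset (Fin k → ℕ)) : ℕ :=
  Set.ncard {C : Finset (Fin k → ℕ) | IsGridCorner k n C ∧ C ⊆ A}

/-!
A set `B ⊆ [n]^k` with more than `c = c_k(n)` points contains a corner; deleting one point of
that corner and iterating shows that `B` contains at least `|B| - c` corners. Applied to every
`2c`-element subset of `A`, each of which thus contains at least `c` corners, and double counted
against the `C(|A| - k - 1, 2c - k - 1)` such subsets through each corner of `A`, this gives
`Γ_k(A) ≥ c · C(|A|, 2c) / C(|A| - k - 1, 2c - k - 1) ≥ c · (|A| / 2c)^(k+1)`,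
the last step because `(|A| - i) / (2c - i) ≥ |A| / 2c` for each `i ≤ k`.
-/

open Finset

theorem Nat.descFactorial_mul_pow_le_descFactorial_mul_pow {s m : ℕ} (hsm : s ≤ m) (j : ℕ) :
    s.descFactorial j * m ^ j ≤ m.descFactorial j * s ^ j := by
  induction j with
  | zero => simp
  | succ j ih =>
    have hstep : (s - j) * m ≤ (m - j) * s := by
      rw [Nat.sub_mul, Nat.sub_mul, mul_comm m s]
      exact Nat.sub_le_sub_left (Nat.mul_le_mul_left j hsm) _
    calc s.descFactorial (j + 1) * m ^ (j + 1)
        = ((s - j) * m) * (s.descFactorial j * m ^ j) := by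
          rw [Nat.descFactorial_succ]; ring
      _ ≤ ((m - j) * s) * (m.descFactorial j * s ^ j) := Nat.mul_le_mul hstep ih
      _ = m.descFactorial (j + 1) * s ^ (j + 1) := by
          rw [Nat.descFactorial_succ]; ring

theorem Nat.pow_mul_choose_sub_le_choose_mul_pow {m s j : ℕ} (hjs : j ≤ s) (hsm : s ≤ m) :
    m ^ j * (m - j).choose (s - j) ≤ m.choose s * s ^ j := by
  have hchoose : m.choose s * s.descFactorial j = m.descFactorial j * (m - j).choose (s - j) := by
    rw [Nat.descFactorial_eq_factorial_mul_choose, Nat.descFactorial_eq_factorial_mul_choose]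
    linear_combination j.factorial * Nat.choose_mul (n := m) hjs
  have hpos : 0 < s.descFactorial j :=
    Nat.pos_of_ne_zero fun h => (Nat.descFactorial_eq_zero_iff_lt.mp h).not_ge hjs
  refine Nat.le_of_mul_le_mul_right ?_ hpos
  calc m ^ j * (m - j).choose (s - j) * s.descFactorial j
      = s.descFactorial j * m ^ j * (m - j).choose (s - j) := by ring
    _ ≤ m.descFactorial j * s ^ j * (m - j).choose (s - j) :=
        Nat.mul_le_mul_right _ (Nat.descFactorial_mul_pow_le_descFactorial_mul_pow hsm j)
    _ = m.choose s * s ^ j * s.descFactorial j := by rw [mul_right_comm, ← hchoose]; ring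

theorem IsGridCorner.card_eq {k n : ℕ} {C : Finset (Fin k → ℕ)} (hC : IsGridCorner k n C) :
    #C = k + 1 := by
  obtain ⟨a, d, hd, rfl, -⟩ := hC
  have hinj : Function.Injective fun i => Function.update a i (a i + d) := by
    intro i j hij
    by_contra hne
    have := congrFun hij i
    simp only [Function.update_self, Function.update_of_ne hne] at this
    omega
  have hbase : a ∉ univ.image fun i => Function.update a i (a i + d) := by
    simp only [mem_image, mem_univ, true_and, not_exists]
    intro i hi
    have := congrFun hi i
    simp only [Function.update_self] at this
    omega
  rw [card_insert_of_notMem hbase, card_image_of_injective _ hinj, card_univ, Fintype.card_fin]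

theorem GridCornerFree.card_le_cornerFreeNumber {k n : ℕ} {B : Finset (Fin k → ℕ)}
    (hB : B ⊆ gridNk k n) (hfree : GridCornerFree k n B) : #B ≤ cornerFreeNumber k n :=
  le_csSup ⟨#(gridNk k n), by rintro m ⟨A, hA, -, rfl⟩; exact card_le_card hA⟩ ⟨B, hB, hfree, rfl⟩

open Classical in
noncomputable def cornersIn (k n : ℕ) (B : Finset (Fin k → ℕ)) : Finset (Finset (Fin k → ℕ)) :=
  {C ∈ B.powerset | IsGridCorner k n C}

section Corners

variable {k n : ℕ}

@[simp]
theorem mem_cornersIn {B C : Finset (Fin k → ℕ)} :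
    C ∈ cornersIn k n B ↔ IsGridCorner k n C ∧ C ⊆ B := by
  simp [cornersIn, and_comm]

theorem cornerCount_eq_card_cornersIn (A : Finset (Fin k → ℕ)) :
    cornerCount k n A = #(cornersIn k n A) := by
  rw [cornerCount, ← Set.ncard_coe_finset]
  congr 1
  ext C
  simp

theorem cornersIn_mono {B B' : Finset (Fin k → ℕ)} (h : B ⊆ B') :
    cornersIn k n B ⊆ cornersIn k n B' := fun _ hC =>
  mem_cornersIn.2 ⟨(mem_cornersIn.1 hC).1, (mem_cornersIn.1 hC).2.trans h⟩

theorem exists_mem_cornersIn_of_cornerFreeNumber_lt_card {B : Finset (Fin k → ℕ)}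
    (hB : B ⊆ gridNk k n) (hcard : cornerFreeNumber k n < #B) : ∃ C, C ∈ cornersIn k n B := by
  by_contra! hnone
  refine hcard.not_ge (GridCornerFree.card_le_cornerFreeNumber hB fun C hC hCB => ?_)
  exact hnone C (mem_cornersIn.2 ⟨hC, hCB⟩)

theorem succ_le_card_of_cornerFreeNumber_lt_card {B : Finset (Fin k → ℕ)}
    (hB : B ⊆ gridNk k n) (hcard : cornerFreeNumber k n < #B) : k + 1 ≤ #B := by
  obtain ⟨C, hC⟩ := exists_mem_cornersIn_of_cornerFreeNumber_lt_card hB hcard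
  rw [mem_cornersIn] at hC
  exact hC.1.card_eq ▸ card_le_card hC.2

theorem card_le_card_cornersIn_add_cornerFreeNumber {B : Finset (Fin k → ℕ)}
    (hB : B ⊆ gridNk k n) : #B ≤ #(cornersIn k n B) + cornerFreeNumber k n := by
  induction B using Finset.strongInduction with
  | H B ih =>
    by_cases hsmall : #B ≤ cornerFreeNumber k n
    · omega
    obtain ⟨C, hC⟩ := exists_mem_cornersIn_of_cornerFreeNumber_lt_card hB (not_le.1 hsmall)
    obtain ⟨hCcorner, hCB⟩ := mem_cornersIn.1 hC
    obtain ⟨x, hxC⟩ : C.Nonempty := card_pos.1 (by rw [hCcorner.card_eq]; omega)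
    have hxB : x ∈ B := hCB hxC
    have hlost : cornersIn k n (B.erase x) ⊂ cornersIn k n B := by
      refine ssubset_of_subset_of_ne (cornersIn_mono (erase_subset x B)) fun heq => ?_
      rw [← heq, mem_cornersIn] at hC
      exact notMem_erase x B (hC.2 hxC)
    have ih' := ih (B.erase x) (erase_ssubset hxB) ((erase_subset x B).trans hB)
    have := card_lt_card hlost
    have := card_erase_add_one hxB
    omega

theorem sub_cornerFreeNumber_mul_choose_le {A : Finset (Fin k → ℕ)} (hA : A ⊆ gridNk k n)
    {s : ℕ} (hs : k + 1 ≤ s) :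
    (s - cornerFreeNumber k n) * (#A).choose s ≤
      #(cornersIn k n A) * (#A - (k + 1)).choose (s - (k + 1)) := by
  rw [mul_comm, ← card_powersetCard]
  refine card_mul_le_card_mul (fun S C => C ⊆ S) (fun S hS => ?_) (fun C hC => ?_)
  · obtain ⟨hSA, hScard⟩ := mem_powersetCard.1 hS
    have hsub : cornersIn k n S ⊆ (cornersIn k n A).bipartiteAbove (fun S C => C ⊆ S) S :=
      fun C hC => (mem_bipartiteAbove _).2
        ⟨cornersIn_mono hSA hC, (mem_cornersIn.1 hC).2⟩
    have := card_le_card_cornersIn_add_cornerFreeNumber (hSA.trans hA)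
    have := card_le_card hsub
    omega
  · obtain ⟨hCcorner, hCA⟩ := mem_cornersIn.1 hC
    rw [bipartiteBelow, card_filter_powersetCard_subset C A s hCA (hCcorner.card_eq ▸ hs),
      hCcorner.card_eq]

theorem cornerFreeNumber_mul_pow_le {A : Finset (Fin k → ℕ)} (hA : A ⊆ gridNk k n)
    (hcard : 2 * cornerFreeNumber k n ≤ #A) :
    cornerFreeNumber k n * #A ^ (k + 1) ≤
      #(cornersIn k n A) * (2 * cornerFreeNumber k n) ^ (k + 1) := by
  set c := cornerFreeNumber k n
  rcases Nat.eq_zero_or_pos c with hc | hc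
  · simp [hc]
  obtain ⟨S, hSA, hScard⟩ := exists_subset_card_eq hcard
  have hks : k + 1 ≤ 2 * c :=
    hScard ▸ succ_le_card_of_cornerFreeNumber_lt_card (hSA.trans hA) (by omega)
  have hdouble := sub_cornerFreeNumber_mul_choose_le hA hks
  rw [show 2 * c - c = c by omega] at hdouble
  have hratio := Nat.pow_mul_choose_sub_le_choose_mul_pow hks hcard
  set D := (#A - (k + 1)).choose (2 * c - (k + 1))
  have hD : 0 < D := Nat.choose_pos (by omega)
  refine Nat.le_of_mul_le_mul_right ?_ hD
  calc c * #A ^ (k + 1) * D = c * (#A ^ (k + 1) * D) := by ring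
    _ ≤ c * ((#A).choose (2 * c) * (2 * c) ^ (k + 1)) := Nat.mul_le_mul_left c hratio
    _ = c * (#A).choose (2 * c) * (2 * c) ^ (k + 1) := by ring
    _ ≤ #(cornersIn k n A) * D * (2 * c) ^ (k + 1) := Nat.mul_le_mul_right _ hdouble
    _ = #(cornersIn k n A) * (2 * c) ^ (k + 1) * D := by ring

end Corners

theorem corner_supersaturation_ratio_general (k : ℕ)
    (n : ℕ) (A : Finset (Fin k → ℕ)) (hA : A ⊆ gridNk k n)
    (hcard : 2 * (cornerFreeNumber k n : ℝ) ≤ (A.card : ℝ)) :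
    ((A.card : ℝ) / (2 * (cornerFreeNumber k n : ℝ))) ^ (k + 1) *
        (cornerFreeNumber k n : ℝ) ≤ (cornerCount k n A : ℝ) := by
  rcases Nat.eq_zero_or_pos (cornerFreeNumber k n) with hc | hc
  · simp [hc]
  have key := cornerFreeNumber_mul_pow_le hA (by exact_mod_cast hcard)
  rw [cornerCount_eq_card_cornersIn, div_pow, div_mul_eq_mul_div, div_le_iff₀ (by positivity),
    mul_comm]
  exact_mod_cast key

/-- Supersaturation in ratio form: if `k ≥ 2` and `A ⊆ [n]^k` has `|A| ≥ 2·c_k(n)`,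
then `Γ_k(A) ≥ (|A|/(2·c_k(n)))^(k+1) · c_k(n)`. -/
theorem corner_supersaturation_ratio (k : ℕ) (hk : 2 ≤ k)
    (n : ℕ) (hn : 0 < n) (A : Finset (Fin k → ℕ)) (hA : A ⊆ gridNk k n)
    (hcard : 2 * (cornerFreeNumber k n : ℝ) ≤ (A.card : ℝ)) :
    ((A.card : ℝ) / (2 * (cornerFreeNumber k n : ℝ))) ^ (k + 1) *
        (cornerFreeNumber k n : ℝ) ≤ (cornerCount k n A : ℝ) :=
  corner_supersaturation_ratio_general k n A hA hcard
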